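/- Let e, x_1, ..., x_p be elements of a ring R with e^2 = e. Then for any non-negative integers k_1, ..., k_p, the multi-iterated commutator [e, x̄]_{k_1,...,k_p} can be written as ∑_{i_1=0}^{k_1} ⋯ ∑_{i_p=0}^{k_p} r_{i_1,...,i_p} · e · [e, x̄]_{i_1,...,i_p} for some elements r_{i_1,...,i_p} in R with an adjoined identity. -/

import Mathlib

/-- Iterated commutator: `itc a b 0 = a`, `itc a b (k+1) = [itc a b k, b]`. -/
def itc {R : Type*} [Ring R] (a b : R) : ℕ → R
  | 0 => a
  | k + 1 => itc a b k * b - b * itc a b k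

/-- Multi-iterated commutator `[a, b̄]_{k_1,…,k_p}` along a list of pairs `(b, k)`. -/
def mitc {R : Type*} [Ring R] (a : R) : List (R × ℕ) → R
  | [] => a
  | (b, k) :: t => mitc (itc a b k) t

/-!
`[e, x̄]_k` lies in the left ideal spanned by the `e * [e, x̄]_i` with `i ≤ k` (pointwise).
For `p = 0` this is `e = e * e`. To add a last variable `b`, apply `[·, b]` repeatedly: since
`[·, b]` is a derivation, `[r * e * t, b] = r * e * [t, b] + [r * e, b] * t`, and the second term
stays in the left ideal because `t = [s, b]_i` with smaller `i` already lies there, by strong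
induction on the number of applications.
-/

section

variable {R : Type*} [Ring R]

theorem itc_succ (a b : R) (k : ℕ) : itc a b (k + 1) = itc a b k * b - b * itc a b k := rfl

theorem mitc_append (a : R) (L₁ L₂ : List (R × ℕ)) :
    mitc a (L₁ ++ L₂) = mitc (mitc a L₁) L₂ := by
  induction L₁ generalizing a with
  | nil => rfl
  | cons q t ih => exact ih _

theorem mitc_ofFn_succ {n : ℕ} (a : R) (f : Fin (n + 1) → R × ℕ) :
    mitc a (List.ofFn f) =
      itc (mitc a (List.ofFn fun j => f j.castSucc)) (f (Fin.last n)).1 (f (Fin.last n)).2 := by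
  rw [List.ofFn_succ', List.concat_eq_append, mitc_append]
  rfl

def itcSpan (e b : R) (S : Set R) (k : ℕ) : Submodule R R :=
  Submodule.span R {y | ∃ s ∈ S, ∃ i ≤ k, e * itc s b i = y}

theorem itcSpan_mono (e b : R) (S : Set R) : Monotone (itcSpan e b S) := fun _ _ hkl =>
  Submodule.span_mono fun _ ⟨s, hs, i, hi, hy⟩ => ⟨s, hs, i, hi.trans hkl, hy⟩

theorem commutator_mem_itcSpan_succ {e b : R} {S : Set R} {k : ℕ}
    (hS : ∀ i ≤ k, ∀ s ∈ S, itc s b i ∈ itcSpan e b S (k + 1)) {u : R}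
    (hu : u ∈ itcSpan e b S k) : u * b - b * u ∈ itcSpan e b S (k + 1) := by
  induction hu using Submodule.span_induction with
  | mem y hy =>
    obtain ⟨s, hs, i, hi, rfl⟩ := hy
    have hgen : e * itc s b (i + 1) ∈ itcSpan e b S (k + 1) :=
      Submodule.subset_span ⟨s, hs, i + 1, by omega, rfl⟩
    have hleibniz : e * itc s b i * b - b * (e * itc s b i) =
        e * itc s b (i + 1) + (e * b - b * e) * itc s b i := by
      rw [itc_succ]; noncomm_ring
    rw [hleibniz]
    exact add_mem hgen (Submodule.smul_mem _ _ (hS i hi s hs))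
  | zero => simp
  | add u v _ _ hu hv =>
    convert add_mem hu hv using 1
    noncomm_ring
  | smul r u hu' hu =>
    have hleibniz : (r • u) * b - b * (r • u) = r • (u * b - b * u) + (r * b - b * r) • u := by
      simp only [smul_eq_mul]; noncomm_ring
    rw [hleibniz]
    exact add_mem (Submodule.smul_mem _ r hu)
      (Submodule.smul_mem _ _ (itcSpan_mono e b S k.le_succ hu'))

theorem itc_mem_itcSpan {e b : R} {S : Set R} (hS : ∀ s ∈ S, s ∈ itcSpan e b S 0) (k : ℕ) :
    ∀ s ∈ S, itc s b k ∈ itcSpan e b S k := by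
  induction k using Nat.strong_induction_on with
  | _ k ih =>
  cases k with
  | zero => exact hS
  | succ k =>
    intro s hs
    exact commutator_mem_itcSpan_succ
      (fun i hi s' hs' => itcSpan_mono e b S (by omega) (ih i (by omega) s' hs'))
      (ih k k.lt_succ_self s hs)

def mitcSpan {p : ℕ} (e : R) (x : Fin p → R) (k : Fin p → ℕ) : Submodule R R :=
  Submodule.span R {y | ∃ i ≤ k, e * mitc e (List.ofFn fun j => (x j, i j)) = y}

theorem mitcSpan_mono {p : ℕ} (e : R) (x : Fin p → R) : Monotone (mitcSpan e x) :=
  fun _ _ hkl => Submodule.span_mono fun _ ⟨i, hi, hy⟩ => ⟨i, hi.trans hkl, hy⟩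

theorem mitc_mem_mitcSpan {e : R} (he : e * e = e) {p : ℕ} (x : Fin p → R) (k : Fin p → ℕ) :
    mitc e (List.ofFn fun j => (x j, k j)) ∈ mitcSpan e x k := by
  induction p with
  | zero => exact Submodule.subset_span ⟨k, le_rfl, by simpa [mitc] using he⟩
  | succ p ih =>
    set b := x (Fin.last p)
    set S := {s | ∃ i ≤ fun j => k j.castSucc,
      mitc e (List.ofFn fun j => (x j.castSucc, i j)) = s}
    have hS : ∀ s ∈ S, s ∈ itcSpan e b S 0 := by
      rintro _ ⟨i, hi, rfl⟩
      refine Submodule.span_le.2 ?_ (mitcSpan_mono e _ hi (ih _ i))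
      rintro _ ⟨i', hi', rfl⟩
      exact Submodule.subset_span ⟨_, ⟨i', hi', rfl⟩, 0, le_rfl, rfl⟩
    have hlast := itc_mem_itcSpan hS (k (Fin.last p)) _ ⟨_, le_rfl, rfl⟩
    rw [mitc_ofFn_succ]
    refine Submodule.span_le.2 ?_ hlast
    rintro _ ⟨_, ⟨i', hi', rfl⟩, i, hi, rfl⟩
    refine Submodule.subset_span ⟨Fin.snoc (α := fun _ => ℕ) i' i, fun j => ?_, ?_⟩
    · induction j using Fin.lastCases with
      | last => simpa using hi
      | cast j => simpa using hi' j
    · rw [mitc_ofFn_succ]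
      simp [b]

end

/-- For idempotent `e`, `[e,x̄]_{k_1,…,k_p} = ∑_{i_1≤k_1,…,i_p≤k_p}
r_{i_1,…,i_p} · e · [e,x̄]_{i_1,…,i_p}` with coefficients from `R` with an adjoined
identity (integer part `z i` plus ring part `r i`). -/
theorem stmt_6 {R : Type*} [Ring R] (p : ℕ) (e : R) (x : Fin p → R)
    (he : e * e = e) (k : Fin p → ℕ) :
    ∃ (r : ((j : Fin p) → Fin (k j + 1)) → R)
      (z : ((j : Fin p) → Fin (k j + 1)) → ℤ),
      mitc e (List.ofFn fun j => (x j, k j)) =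
        ∑ i : (j : Fin p) → Fin (k j + 1),
          (z i • (e * mitc e (List.ofFn fun j => (x j, (i j : ℕ)))) +
            r i * (e * mitc e (List.ofFn fun j => (x j, (i j : ℕ))))) := by
  have hspan : mitcSpan e x k ≤ Submodule.span R (Set.range
      fun i : (j : Fin p) → Fin (k j + 1) => e * mitc e (List.ofFn fun j => (x j, (i j : ℕ)))) := by
    refine Submodule.span_le.2 ?_
    rintro _ ⟨i, hi, rfl⟩
    exact Submodule.subset_span ⟨fun j => ⟨i j, Nat.lt_succ_of_le (hi j)⟩, rfl⟩
  obtain ⟨r, hr⟩ :=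
    (Submodule.mem_span_range_iff_exists_fun R).1 (hspan (mitc_mem_mitcSpan he x k))
  exact ⟨r, 0, by simp [← hr]⟩
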